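/- arXiv:1907.10964 — 2 statements merged into one kernel-verified Lean document; each statement's English description precedes it below -/
import Mathlib

section
/- Let R be a noetherian ring with ideal I, and let A be an R-algebra. The I-adic weak completion A† (the subring of the I-adic completion consisting of elements ξ = ∑_{i≥0} P_i(x_1,…,x_r) with x_j ∈ A, P_i ∈ I^i·R[X_1,…,X_r], and deg P_i ≤ c(i+1) for some constant c > 0) is an R-subalgebra of the I-adic completion of A, i.e. it is closed under addition and multiplication and contains the image of A. -/
noncomputable section

variable {R : Type*} [CommRing R] {A : Type*} [CommRing A] [Algebra R A] (I : Ideal R)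

/-- The extension of `I` to `A`. -/
def extIdeal : Ideal A := I.map (algebraMap R A)

/-- The `I`-adic completion `Â = lim A/I^nA` realised as compatible sequences in the
quotients `A / I^n A` (inside the product ring `Π n, A / I^n A`). -/
def IsCompat (f : ∀ n : ℕ, A ⧸ (extIdeal (A := A) I) ^ n) : Prop :=
  ∀ m n : ℕ, (h : m ≤ n) →
    Ideal.Quotient.factor (Ideal.pow_le_pow_right h) (f n) = f m

/-- `ξ ∈ A†`: the element `ξ` of the `I`-adic completion admits a weak presentation
`ξ = ∑_{i≥0} P_i(x_1,…,x_r)` with `x_j ∈ A`, `P_i ∈ I^i·R[X_1,…,X_r]` and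
`deg P_i ≤ c(i+1)` for some constant `c > 0`.  (Since `P_i` has coefficients in `I^i`,
the partial sum `∑_{i<n} P_i(x)` computes `ξ` modulo `I^n A`.) -/
def IsWeak (f : ∀ n : ℕ, A ⧸ (extIdeal (A := A) I) ^ n) : Prop :=
  ∃ (r : ℕ) (x : Fin r → A) (P : ℕ → MvPolynomial (Fin r) R) (c : ℕ), 0 < c ∧
    (∀ i : ℕ, ∀ d ∈ (P i).support, (P i).coeff d ∈ I ^ i) ∧
    (∀ i : ℕ, (P i).totalDegree ≤ c * (i + 1)) ∧
    (∀ n : ℕ, f n = Ideal.Quotient.mk ((extIdeal (A := A) I) ^ n)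
      (∑ i ∈ Finset.range n, MvPolynomial.aeval x (P i)))

namespace WeakAux

open MvPolynomial Finset

lemma aeval_mem_pow {r : ℕ} (x : Fin r → A) (P : MvPolynomial (Fin r) R) (i : ℕ)
    (h : ∀ d, P.coeff d ∈ I ^ i) :
    MvPolynomial.aeval x P ∈ (extIdeal (A := A) I) ^ i := by
  rw [extIdeal, ← Ideal.map_pow]
  rw [MvPolynomial.aeval_def, MvPolynomial.eval₂_eq]
  refine Ideal.sum_mem _ fun d _ => ?_
  exact Ideal.mul_mem_right _ _ (Ideal.mem_map_of_mem _ (h d))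

lemma coeff_rename_mem {r s : ℕ} (f : Fin r → Fin s) (hf : Function.Injective f)
    (P : MvPolynomial (Fin r) R) (J : Ideal R) (h : ∀ d, P.coeff d ∈ J) :
    ∀ d, ((MvPolynomial.rename f) P).coeff d ∈ J := by
  intro d
  by_cases h0 : ((MvPolynomial.rename f) P).coeff d = 0
  · simp [h0]
  · obtain ⟨u, hu, -⟩ := MvPolynomial.coeff_rename_ne_zero f P d h0
    rw [← hu, MvPolynomial.coeff_rename_mapDomain f hf]
    exact h u

lemma castAdd_inj {r s : ℕ} : Function.Injective (fun i : Fin r => Fin.castAdd s i) :=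
  fun a b h => Fin.ext (by simpa using congrArg Fin.val h)

lemma natAdd_inj {r s : ℕ} : Function.Injective (fun i : Fin s => Fin.natAdd r i) :=
  fun a b h => Fin.ext (by simpa using congrArg Fin.val h)

lemma coeff_all (P : ℕ → MvPolynomial (Fin r) R)
    (h : ∀ i : ℕ, ∀ d ∈ (P i).support, (P i).coeff d ∈ I ^ i) :
    ∀ i d, (P i).coeff d ∈ I ^ i := by
  intro i d
  by_cases hd : d ∈ (P i).support
  · exact h i d hd
  · rw [MvPolynomial.notMem_support_iff.mp hd]; exact zero_mem _

lemma sum_antidiag (n : ℕ) (F : ℕ → ℕ → A) :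
    ∑ k ∈ Finset.range n, ∑ p ∈ Finset.HasAntidiagonal.antidiagonal k, F p.1 p.2
      = ∑ p ∈ (Finset.range n ×ˢ Finset.range n).filter (fun p => p.1 + p.2 < n), F p.1 p.2 := by
  rw [← Finset.sum_biUnion]
  · apply Finset.sum_congr _ fun _ _ => rfl
    ext p
    simp only [Finset.mem_biUnion, Finset.mem_range, Finset.HasAntidiagonal.mem_antidiagonal,
      Finset.mem_filter, Finset.mem_product]
    constructor
    · rintro ⟨k, hk, hp⟩; omega
    · rintro ⟨⟨h1, h2⟩, h3⟩; exact ⟨p.1 + p.2, h3, rfl⟩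
  · intro a _ b _ hab
    simp only [Function.onFun, Finset.disjoint_left, Finset.HasAntidiagonal.mem_antidiagonal]
    intro p hp h
    exact hab (hp ▸ h)

end WeakAux

/-- for a noetherian ring `R` with ideal `I` and an `R`-algebra `A`, the
`I`-adic weak completion `A†` is an `R`-subalgebra of the `I`-adic completion of `A`:
it contains the image of `A` (hence of `R`) and is closed under addition and
multiplication. -/
theorem weakCompletion_subalgebra [IsNoetherianRing R] :
    (∀ a : A, IsCompat I (fun n => Ideal.Quotient.mk _ a) ∧
      IsWeak I (fun n => Ideal.Quotient.mk _ a)) ∧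
    (∀ f g : ∀ n : ℕ, A ⧸ (extIdeal (A := A) I) ^ n,
      IsCompat I f → IsWeak I f → IsCompat I g → IsWeak I g →
        (IsCompat I (f + g) ∧ IsWeak I (f + g)) ∧
        (IsCompat I (f * g) ∧ IsWeak I (f * g))) := by
  classical
  constructor
  · -- image of A
    intro a
    refine ⟨fun m n h => Ideal.Quotient.factor_mk _ a, ?_⟩
    refine ⟨1, ![a], fun i => if i = 0 then MvPolynomial.X 0 else 0, 1, one_pos, ?_, ?_, ?_⟩
    · intro i d hd
      rcases eq_or_ne i 0 with rfl | hi
      · simp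
      · simp [hi] at hd
    · intro i
      rcases eq_or_ne i 0 with rfl | hi
      · simp only [if_pos rfl]
        refine le_trans (le_trans (le_of_eq rfl) (MvPolynomial.totalDegree_monomial_le _ _)) ?_
        simp
      · simp [hi]
    · intro n
      cases n with
      | zero =>
        have : (extIdeal (A := A) I) ^ 0 = ⊤ := by simp
        rw [Ideal.Quotient.eq]
        rw [this]; exact Submodule.mem_top
      | succ n =>
        congr 1
        have : ∀ i, (MvPolynomial.aeval (R := R) (![a] : Fin 1 → A))
            (if i = 0 then MvPolynomial.X 0 else 0) = if i = 0 then a else 0 := by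
          intro i
          split <;> simp
        rw [Finset.sum_congr rfl fun i _ => this i, Finset.sum_ite_eq' (Finset.range (n + 1)) 0]
        simp
  · -- closure under + and *
    intro f g hfc hfw hgc hgw
    obtain ⟨r, x, P, c, hc, hPcs, hPd, hPn⟩ := hfw
    obtain ⟨s, y, Q, d, hd, hQcs, hQd, hQn⟩ := hgw
    have hPc := WeakAux.coeff_all I P hPcs
    have hQc := WeakAux.coeff_all I Q hQcs
    set z : Fin (r + s) → A := Fin.append x y with hz
    have hzc : ∀ p : MvPolynomial (Fin r) R,
        MvPolynomial.aeval z ((MvPolynomial.rename fun i => Fin.castAdd s i) p)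
          = MvPolynomial.aeval x p := by
      intro p
      rw [MvPolynomial.aeval_rename]
      have hcomp : (z ∘ fun i => Fin.castAdd s i) = x := funext fun i => Fin.append_left x y i
      rw [hcomp]
    have hzn : ∀ q : MvPolynomial (Fin s) R,
        MvPolynomial.aeval z ((MvPolynomial.rename fun i => Fin.natAdd r i) q)
          = MvPolynomial.aeval y q := by
      intro q
      rw [MvPolynomial.aeval_rename]
      have hcomp : (z ∘ fun i => Fin.natAdd r i) = y := funext fun i => Fin.append_right x y i
      rw [hcomp]
    refine ⟨⟨?_, ?_⟩, ?_, ?_⟩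
    · -- compat of sum
      intro m n h
      rw [Pi.add_apply, Pi.add_apply, map_add, hfc m n h, hgc m n h]
    · -- weak of sum
      refine ⟨r + s, z,
        fun i => (MvPolynomial.rename fun j => Fin.castAdd s j) (P i)
          + (MvPolynomial.rename fun j => Fin.natAdd r j) (Q i),
        c + d, by positivity, ?_, ?_, ?_⟩
      · intro i e _
        rw [MvPolynomial.coeff_add]
        exact add_mem
          (WeakAux.coeff_rename_mem _ WeakAux.castAdd_inj _ _ (hPc i) e)
          (WeakAux.coeff_rename_mem _ WeakAux.natAdd_inj _ _ (hQc i) e)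
      · intro i
        refine le_trans (MvPolynomial.totalDegree_add _ _) (max_le ?_ ?_)
        · exact le_trans (MvPolynomial.totalDegree_rename_le _ _)
            (le_trans (hPd i) (Nat.mul_le_mul_right _ (Nat.le_add_right c d)))
        · exact le_trans (MvPolynomial.totalDegree_rename_le _ _)
            (le_trans (hQd i) (Nat.mul_le_mul_right _ (Nat.le_add_left d c)))
      · intro n
        rw [Pi.add_apply, hPn n, hQn n, ← map_add]
        congr 1
        rw [← Finset.sum_add_distrib]
        refine Finset.sum_congr rfl fun i _ => ?_
        rw [map_add, hzc, hzn]
    · -- compat of product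
      intro m n h
      rw [Pi.mul_apply, Pi.mul_apply, map_mul, hfc m n h, hgc m n h]
    · -- weak of product
      refine ⟨r + s, z,
        fun k => ∑ p ∈ Finset.HasAntidiagonal.antidiagonal k,
          (MvPolynomial.rename fun j => Fin.castAdd s j) (P p.1)
            * (MvPolynomial.rename fun j => Fin.natAdd r j) (Q p.2),
        c + d, by positivity, ?_, ?_, ?_⟩
      · intro k e _
        rw [MvPolynomial.coeff_sum]
        refine Ideal.sum_mem _ fun p hp => ?_
        have hpk : p.1 + p.2 = k := Finset.HasAntidiagonal.mem_antidiagonal.mp hp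
        rw [MvPolynomial.coeff_mul, ← hpk]
        refine Ideal.sum_mem _ fun q _ => ?_
        rw [pow_add]
        exact Ideal.mul_mem_mul
          (WeakAux.coeff_rename_mem _ WeakAux.castAdd_inj _ _ (hPc p.1) q.1)
          (WeakAux.coeff_rename_mem _ WeakAux.natAdd_inj _ _ (hQc p.2) q.2)
      · intro k
        refine le_trans (MvPolynomial.totalDegree_finset_sum _ _) (Finset.sup_le fun p hp => ?_)
        have hpk : p.1 + p.2 = k := Finset.HasAntidiagonal.mem_antidiagonal.mp hp
        refine le_trans (MvPolynomial.totalDegree_mul _ _) ?_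
        have h1 := le_trans
          (MvPolynomial.totalDegree_rename_le (fun j => Fin.castAdd s j) (P p.1)) (hPd p.1)
        have h2 := le_trans
          (MvPolynomial.totalDegree_rename_le (fun j => Fin.natAdd r j) (Q p.2)) (hQd p.2)
        have : c * (p.1 + 1) + d * (p.2 + 1) ≤ (c + d) * (k + 1) := by nlinarith [hpk]
        omega
      · intro n
        rw [Pi.mul_apply, hPn n, hQn n, ← map_mul, Ideal.Quotient.eq]
        have hev : ∀ k, MvPolynomial.aeval z (∑ p ∈ Finset.HasAntidiagonal.antidiagonal k,
            (MvPolynomial.rename fun j => Fin.castAdd s j) (P p.1)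
              * (MvPolynomial.rename fun j => Fin.natAdd r j) (Q p.2))
            = ∑ p ∈ Finset.HasAntidiagonal.antidiagonal k,
                MvPolynomial.aeval x (P p.1) * MvPolynomial.aeval y (Q p.2) := by
          intro k
          rw [map_sum]
          exact Finset.sum_congr rfl fun p _ => by rw [map_mul, hzc, hzn]
        rw [Finset.sum_congr rfl fun k _ => hev k,
          WeakAux.sum_antidiag n (fun i j => MvPolynomial.aeval x (P i) * MvPolynomial.aeval y (Q j)),
          Finset.sum_mul_sum, ← Finset.sum_product',
          ← Finset.sum_filter_add_sum_filter_not (Finset.range n ×ˢ Finset.range n)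
            (fun p => p.1 + p.2 < n)]
        simp only [add_sub_cancel_left]
        refine Ideal.sum_mem _ fun p hp => ?_
        rw [Finset.mem_filter, Finset.mem_product, Finset.mem_range, Finset.mem_range] at hp
        have hn : n ≤ p.1 + p.2 := not_lt.mp hp.2
        refine Ideal.pow_le_pow_right hn ?_
        rw [pow_add]
        exact Ideal.mul_mem_mul
          (WeakAux.aeval_mem_pow I x (P p.1) p.1 (hPc p.1))
          (WeakAux.aeval_mem_pow I y (Q p.2) p.2 (hQc p.2))

end
end

section
/- Let R be a ring, σ : R → R a ring endomorphism, F a quotient field (or ring) of R via a surjection j_0 : R → F compatible with a ring endomorphism σ_F of F. Let 𝒟 be a finitely generated free R-module with a σ-semilinear endomorphism φ_𝒟 whose linearization R ⊗_{σ,R} 𝒟 → 𝒟 is an isomorphism, let D = F ⊗_{R,j_0} 𝒟 with induced σ_F-semilinear automorphism φ_D. Suppose further that the kernel ideal I = ker(j_0) satisfies: σ(I) ⊂ I and the induced maps make the relevant completion arguments work (as for R = ℚ⊗R_PD, F the fraction field of W(k), σ induced by s ↦ s^p). Then an F-linear section s : D → 𝒟 of the canonical surjection j_0 : 𝒟 →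 D satisfying s ∘ φ_D = φ_𝒟 ∘ s is unique if it exists. -/
/-!
The difference `δ = s₁ - s₂` of two equivariant sections lands in `I • 𝒟`, where
`I = ker j₀`, and intertwines `φD` with `φ𝒟`. Since `σ(I) ⊆ I²`, the map `φ𝒟` carries
`Iⁿ • 𝒟` into `I²ⁿ • 𝒟`; as `φD` is onto, every value of `δ` lies in `Iⁿ • 𝒟` for all `n`,
hence vanishes by `I`-adic separatedness.
-/

section SemilinearContraction

variable {R M : Type*} [CommSemiring R] [AddCommMonoid M] [Module R M]
  {σ : R →+* R} {φ : M →+ M}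

theorem mem_smul_top_of_semilinear (hφ : ∀ (r : R) (x : M), φ (r • x) = σ r • φ x)
    {I J : Ideal R} (hσ : I.map σ ≤ J) {x : M} (hx : x ∈ I • (⊤ : Submodule R M)) :
    φ x ∈ J • (⊤ : Submodule R M) := by
  refine Submodule.smul_induction_on hx (fun r hr m _ ↦ ?_) (fun x y hx hy ↦ ?_)
  · rw [hφ]
    exact Submodule.smul_mem_smul (hσ (Ideal.mem_map_of_mem σ hr)) trivial
  · rw [map_add]
    exact Submodule.add_mem _ hx hy

theorem mem_pow_smul_top_of_semilinear (hφ : ∀ (r : R) (x : M), φ (r • x) = σ r • φ x)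
    {I : Ideal R} (hσ : I.map σ ≤ I ^ 2) (n : ℕ) {x : M}
    (hx : x ∈ I ^ n • (⊤ : Submodule R M)) : φ x ∈ I ^ (2 * n) • (⊤ : Submodule R M) :=
  mem_smul_top_of_semilinear hφ
    (by rw [Ideal.map_pow, pow_mul]; exact Ideal.pow_right_mono hσ n) hx

theorem mem_iInf_pow_smul_top_of_intertwines {D : Type*}
    (hφ : ∀ (r : R) (x : M), φ (r • x) = σ r • φ x) {I : Ideal R} (hσ : I.map σ ≤ I ^ 2)
    {g : D → D} (hg : Function.Surjective g) {δ : D → M} (hδg : ∀ y, δ (g y) = φ (δ y))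
    (hδ : ∀ y, δ y ∈ I • (⊤ : Submodule R M)) (y : D) :
    δ y ∈ ⨅ n : ℕ, I ^ n • (⊤ : Submodule R M) := by
  suffices h : ∀ n y, δ y ∈ I ^ (n + 1) • (⊤ : Submodule R M) from
    Submodule.mem_iInf _ |>.2 fun n ↦
      Submodule.smul_mono_left (Ideal.pow_le_pow_right n.le_succ) (h n y)
  intro n
  induction n with
  | zero => simpa using hδ
  | succ n ih =>
    intro y
    obtain ⟨y, rfl⟩ := hg y
    rw [hδg]
    exact Submodule.smul_mono_left (Ideal.pow_le_pow_right (by omega))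
      (mem_pow_smul_top_of_semilinear hφ hσ (n + 1) (ih y))

end SemilinearContraction

theorem frobenius_section_unique_general
    (F R : Type*) [Field F] [CommRing R] [Algebra F R]
    (j₀ : R →ₐ[F] F) (σ : R →+* R)
    (hσI : ∀ r : R, j₀ r = 0 → σ r ∈ (RingHom.ker (j₀ : R →+* F)) ^ 2)
    (𝒟 : Type*) [AddCommGroup 𝒟] [Module R 𝒟] [Module F 𝒟]
    (hsep : (⨅ n : ℕ, ((RingHom.ker (j₀ : R →+* F)) ^ n • ⊤ : Submodule R 𝒟)) = ⊥)
    (φ𝒟 : 𝒟 →+ 𝒟) (hφ𝒟 : ∀ (r : R) (x : 𝒟), φ𝒟 (r • x) = σ r • φ𝒟 x)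
    (D : Type*) [AddCommGroup D] [Module F D]
    (π : 𝒟 →+ D)
    (hkerπ : ∀ x : 𝒟, π x = 0 ↔ x ∈ ((RingHom.ker (j₀ : R →+* F)) • ⊤ : Submodule R 𝒟))
    (φD : D →+ D) (hφDbij : Function.Bijective φD)
    (s₁ s₂ : D →ₗ[F] 𝒟)
    (hs₁ : ∀ x : D, π (s₁ x) = x) (hs₂ : ∀ x : D, π (s₂ x) = x)
    (hc₁ : ∀ x : D, s₁ (φD x) = φ𝒟 (s₁ x)) (hc₂ : ∀ x : D, s₂ (φD x) = φ𝒟 (s₂ x)) :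
    s₁ = s₂ := by
  have hσ : (RingHom.ker (j₀ : R →+* F)).map σ ≤ RingHom.ker (j₀ : R →+* F) ^ 2 :=
    Ideal.map_le_iff_le_comap.2 hσI
  ext x
  have hδ := mem_iInf_pow_smul_top_of_intertwines hφ𝒟 hσ hφDbij.2 (δ := fun y ↦ s₁ y - s₂ y)
    (fun y ↦ by simp only [hc₁, hc₂, map_sub])
    (fun y ↦ (hkerπ _).1 (by rw [map_sub, hs₁, hs₂, sub_self])) x
  rw [hsep, Submodule.mem_bot] at hδ
  exact sub_eq_zero.1 hδ

/-- uniqueness of the Frobenius-equivariant section.  Let `F ⊆ R` with an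
`F`-algebra retraction `j₀ : R → F` (e.g. `R = ℚ⊗R_PD`, `F = Frac W(k)`, `j₀ : s ↦ 0`),
`σ` a Frobenius on `R` lifting `σ_F` on `F` with `σ(ker j₀) ⊆ (ker j₀)^2` (as for
`σ(s) = s^p`).  Let `𝒟` be a finite free `R`-module, `(ker j₀)`-adically separated, with
a `σ`-semilinear `φ𝒟` whose linearization is onto, and let `D` be its fiber along `j₀`
(via `π` with `ker π = (ker j₀)·𝒟`), with induced bijective `σ_F`-semilinear `φD`.
Then an `F`-linear section `s : D → 𝒟` of `π` satisfying `s ∘ φD = φ𝒟 ∘ s` is unique. -/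
theorem frobenius_section_unique
    (F R : Type*) [Field F] [CommRing R] [Algebra F R]
    (j₀ : R →ₐ[F] F) (σ : R →+* R) (σF : F →+* F)
    (hcomm : ∀ r : R, j₀ (σ r) = σF (j₀ r))
    (hσI : ∀ r : R, j₀ r = 0 → σ r ∈ (RingHom.ker (j₀ : R →+* F)) ^ 2)
    (𝒟 : Type*) [AddCommGroup 𝒟] [Module R 𝒟] [Module F 𝒟] [IsScalarTower F R 𝒟]
    [Module.Free R 𝒟] [Module.Finite R 𝒟]
    (hsep : (⨅ n : ℕ, ((RingHom.ker (j₀ : R →+* F)) ^ n • ⊤ : Submodule R 𝒟)) = ⊥)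
    (φ𝒟 : 𝒟 →+ 𝒟) (hφ𝒟 : ∀ (r : R) (x : 𝒟), φ𝒟 (r • x) = σ r • φ𝒟 x)
    (hlin : Submodule.span R (Set.range φ𝒟) = ⊤)
    (D : Type*) [AddCommGroup D] [Module F D]
    (π : 𝒟 →+ D) (hπ : ∀ (r : R) (x : 𝒟), π (r • x) = j₀ r • π x)
    (hπsurj : Function.Surjective π)
    (hkerπ : ∀ x : 𝒟, π x = 0 ↔ x ∈ ((RingHom.ker (j₀ : R →+* F)) • ⊤ : Submodule R 𝒟))
    (φD : D →+ D) (hφD : ∀ (f : F) (x : D), φD (f • x) = σF f • φD x)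
    (hφDπ : ∀ x : 𝒟, φD (π x) = π (φ𝒟 x)) (hφDbij : Function.Bijective φD)
    (s₁ s₂ : D →ₗ[F] 𝒟)
    (hs₁ : ∀ x : D, π (s₁ x) = x) (hs₂ : ∀ x : D, π (s₂ x) = x)
    (hc₁ : ∀ x : D, s₁ (φD x) = φ𝒟 (s₁ x)) (hc₂ : ∀ x : D, s₂ (φD x) = φ𝒟 (s₂ x)) :
    s₁ = s₂ :=
  frobenius_section_unique_general F R j₀ σ hσI 𝒟 hsep φ𝒟 hφ𝒟 D π hkerπ φD hφDbij s₁ s₂ hs₁ hs₂ hc₁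
    hc₂
end
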